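/- Theorem (arbitrarily many sequential detections for the GHZ state): For every integer N ≥ 3 and every natural number n, there exist sharpness parameters λ_1, …, λ_n ∈ (0,1) such that, setting ρ_1 = |GHZ_N⟩⟨GHZ_N| and ρ_k = (id ⊗ Φ_{λ_{k−1}})(ρ_{k−1}) for 2 ≤ k ≤ n (the map acting on the N-th qubit), one has Tr(W^{λ_k} ρ_k) < 0 for every k = 1, …, n; i.e., all n sequential observers detect genuine multipartite entanglement. -/

import Mathlib

/-!
Every state of the sequence is supported on the four basis vectors `|x⋯x y⟩` (with `y` on the
measured qubit), where it is a two-qubit X-state: diagonal `(a, b, b, a)` and anti-diagonal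
`(c, d, d, c)`. On such states `W^λ` has expectation `4b − 2λ(c + d)`, and `Φ_λ` mixes `a` with `b`
and `c` with `d` at rate `(1 − s)/4`, `s = √(1 − λ²)`. Starting from GHZ and using one `λ` for
everybody, the `(j+1)`-st observer sees `1 − t^j − λ 2^{-j}` with `t = (1 + s)/2`. Since
`s ≥ 1 − λ²`, Bernoulli's inequality bounds `1 − t^j` by `jλ²/2`, which is below `λ 2^{-j}` once
`jλ ≤ 2^{-j}`; `λ = 2^{-n}/(n + 2)` achieves this for all `j < n`.
-/

open Matrix
open scoped ComplexOrder

noncomputable section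

/-- The space of operators on `N` qubits: complex `2^N × 2^N` matrices, with the
`N`-fold tensor-product structure made explicit by indexing rows and columns by
functions `Fin N → Fin 2`. -/
abbrev QM (N : ℕ) := Matrix (Fin N → Fin 2) (Fin N → Fin 2) ℂ

/-- The Pauli matrix σ_x. -/
def sigx : Matrix (Fin 2) (Fin 2) ℂ := !![0, 1; 1, 0]

/-- The Pauli matrix σ_z. -/
def sigz : Matrix (Fin 2) (Fin 2) ℂ := !![1, 0; 0, -1]

/-- The tensor (Kronecker) product `f 0 ⊗ f 1 ⊗ ⋯ ⊗ f (N-1)` of single-qubit operators. -/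
def tensorAll (N : ℕ) (f : Fin N → Matrix (Fin 2) (Fin 2) ℂ) : QM N :=
  Matrix.of fun v w => ∏ i, f i (v i) (w i)

/-- The single-qubit operator `M` acting on qubit `m`, tensored with the identity
on all other qubits. -/
def site (N : ℕ) (m : Fin N) (M : Matrix (Fin 2) (Fin 2) ℂ) : QM N :=
  tensorAll N (fun i => if i = m then M else 1)

/-- GHZ stabilizer generator `S_1 = σ_x^(1) σ_x^(2) ⋯ σ_x^(N)`. -/
def ghzS1 (N : ℕ) : QM N := tensorAll N (fun _ => sigx)

/-- GHZ stabilizer generator with σ_z on qubits `m-1` and `m` (0-based `m : Fin N`,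
`m ≠ 0`); it represents the 1-based generator `S_{m+1} = σ_z^{(m)} σ_z^{(m+1)}`. -/
def ghzSz (N : ℕ) (m : Fin N) : QM N :=
  tensorAll N (fun i => if i.val = m.val - 1 ∨ i = m then sigz else 1)

/-- The product `∏_{m=2}^{N} (I + S_m)/2` appearing in the GHZ witness
(the factors pairwise commute, so the list ordering is immaterial). -/
def ghzProd (N : ℕ) : QM N :=
  (((List.finRange N).filter (fun m => m.val ≠ 0)).map
    (fun m => (1/2 : ℂ) • ((1 : QM N) + ghzSz N m))).prod

/-- The GHZ genuine-multipartite-entanglement witness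
`W = 3 I − 2 [ (I + S_1)/2 + ∏_{m=2}^N (I + S_m)/2 ]`. -/
def ghzWitness (N : ℕ) : QM N :=
  (3 : ℂ) • (1 : QM N) -
    (2 : ℂ) • ((1/2 : ℂ) • ((1 : QM N) + ghzS1 N) + ghzProd N)

/-- The modified (unsharp) GHZ witness
`W^λ = 3 I − 2 [ (I + λ S_1)/2 + ∏_{m=2}^N (I + S_m)/2 ]`. -/
def ghzWitnessMod (N : ℕ) (lam : ℝ) : QM N :=
  (3 : ℂ) • (1 : QM N) -
    (2 : ℂ) • ((1/2 : ℂ) • ((1 : QM N) + (lam : ℂ) • ghzS1 N) + ghzProd N)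

/-- The `N`-qubit GHZ state vector `(|0⟩^{⊗N} + |1⟩^{⊗N})/√2`. -/
def ghzVec (N : ℕ) : (Fin N → Fin 2) → ℂ := fun v =>
  if ∀ i, v i = 0 then ((1 / Real.sqrt 2 : ℝ) : ℂ)
  else if ∀ i, v i = 1 then ((1 / Real.sqrt 2 : ℝ) : ℂ) else 0

/-- The rank-one projector `|ψ⟩⟨ψ|` onto a vector `ψ`. -/
def outer (N : ℕ) (ψ : (Fin N → Fin 2) → ℂ) : QM N :=
  Matrix.vecMulVec ψ (star ψ)

/-- The single-qubit unsharp-measurement channel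
`Φ_λ(ρ) = ((2+√(1−λ²))/4)ρ + (1/4)σ_z ρ σ_z + ((1−√(1−λ²))/4)σ_x ρ σ_x`, applied to
qubit `m` of an `N`-qubit operator (and acting as the identity on the other qubits). -/
def phiMap (N : ℕ) (m : Fin N) (lam : ℝ) (ρ : QM N) : QM N :=
  (((2 + Real.sqrt (1 - lam ^ 2)) / 4 : ℝ) : ℂ) • ρ
    + (1/4 : ℂ) • (site N m sigz * ρ * site N m sigz)
    + (((1 - Real.sqrt (1 - lam ^ 2)) / 4 : ℝ) : ℂ) • (site N m sigx * ρ * site N m sigx)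

section

variable {N : ℕ}

def zsign : Fin 2 → ℂ := ![1, -1]

lemma sigz_eq_diagonal : sigz = diagonal zsign := by
  ext i j; fin_cases i <;> fin_cases j <;> simp [sigz, zsign]

lemma sigx_apply (a b : Fin 2) : sigx a b = if a.rev = b then 1 else 0 := by
  fin_cases a <;> fin_cases b <;> simp [sigx]

lemma zsign_mul_zsign (a b : Fin 2) : zsign a * zsign b = if a = b then 1 else -1 := by
  fin_cases a <;> fin_cases b <;> norm_num [zsign]

lemma tensorAll_diagonal (g : Fin N → Fin 2 → ℂ) :
    tensorAll N (fun i => diagonal (g i)) = diagonal fun v => ∏ i, g i (v i) := by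
  ext u v
  by_cases h : u = v
  · subst h; simp [tensorAll]
  · obtain ⟨i, hi⟩ := Function.ne_iff.mp h
    rw [diagonal_apply_ne _ h, tensorAll, of_apply]
    exact Finset.prod_eq_zero (Finset.mem_univ i) (diagonal_apply_ne _ hi)

lemma site_sigz (m : Fin N) : site N m sigz = diagonal fun v => zsign (v m) := by
  have : (fun i => if i = m then sigz else 1) =
      fun i => diagonal fun a => if i = m then zsign a else 1 := by
    funext i; split_ifs <;> simp [sigz_eq_diagonal, ← diagonal_one]
  rw [site, this, tensorAll_diagonal]
  simp

def flipAt (m : Fin N) : Equiv.Perm (Fin N → Fin 2) :=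
  Function.Involutive.toPerm (fun v => Function.update v m (v m).rev) fun v => by simp

lemma flipAt_apply (m : Fin N) (v : Fin N → Fin 2) :
    flipAt m v = Function.update v m (v m).rev := rfl

lemma flipAt_symm (m : Fin N) : (flipAt m).symm = flipAt m :=
  Function.Involutive.toPerm_symm _

lemma site_sigx (m : Fin N) : site N m sigx = (flipAt m).permMatrix ℂ := by
  ext u v
  have : ∀ i, (if i = m then sigx else 1) (u i) (v i) =
      if flipAt m u i = v i then 1 else 0 := by
    intro i
    by_cases hi : i = m
    · subst hi; simp [flipAt_apply, sigx_apply]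
    · simp [flipAt_apply, hi, one_apply]
  rw [site, tensorAll, of_apply, Finset.prod_congr rfl fun i _ => this i, Fintype.prod_boole]
  simp [Equiv.Perm.permMatrix, funext_iff]

lemma site_sigz_conj_single (m : Fin N) (u v : Fin N → Fin 2) (c : ℂ) :
    site N m sigz * single u v c * site N m sigz =
      (zsign (u m) * zsign (v m)) • single u v c := by
  ext a b
  by_cases h : u = a ∧ v = b
  · obtain ⟨rfl, rfl⟩ := h; simp [site_sigz]; ring
  · simp [site_sigz, h]

lemma site_sigx_conj_single (m : Fin N) (u v : Fin N → Fin 2) (c : ℂ) :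
    site N m sigx * single u v c * site N m sigx = single (flipAt m u) (flipAt m v) c := by
  rw [site_sigx, Equiv.Perm.permMatrix, PEquiv.toMatrix_toPEquiv_mul,
    PEquiv.mul_toMatrix_toPEquiv, submatrix_submatrix]
  simp [flipAt_symm]

def ket (m : Fin N) (x y : Fin 2) : Fin N → Fin 2 := Function.update (fun _ => x) m y

@[simp]
lemma ket_apply_self (m : Fin N) (x y : Fin 2) : ket m x y m = y := Function.update_self ..

lemma ket_apply_of_ne {m i : Fin N} (h : i ≠ m) (x y : Fin 2) : ket m x y i = x :=
  Function.update_of_ne h ..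

lemma ket_self (x : Fin 2) (m : Fin N) : ket m x x = fun _ => x := Function.update_eq_self _ _

lemma flipAt_ket (m : Fin N) (x y : Fin 2) : flipAt m (ket m x y) = ket m x y.rev := by
  simp [flipAt_apply, ket]

-- For `m = 0` the truncated subtraction makes this `m` itself.
def prevQubit (m : Fin N) : Fin N := ⟨m - 1, by omega⟩

lemma prevQubit_ne {m : Fin N} (hm : (m : ℕ) ≠ 0) : prevQubit m ≠ m := by
  simp [prevQubit, Fin.ext_iff]; omega

lemma ket_inj {m : Fin N} (hm : (m : ℕ) ≠ 0) {x y x' y' : Fin 2} :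
    ket m x y = ket m x' y' ↔ x = x' ∧ y = y' := by
  refine ⟨fun h => ⟨?_, by simpa using congrFun h m⟩, by rintro ⟨rfl, rfl⟩; rfl⟩
  simpa [ket_apply_of_ne (prevQubit_ne hm)] using congrFun h (prevQubit m)

lemma ghzS1_apply (u v : Fin N → Fin 2) :
    ghzS1 N u v = if ∀ i, (u i).rev = v i then 1 else 0 := by
  rw [ghzS1, tensorAll, of_apply, Finset.prod_congr rfl fun i _ => sigx_apply _ _]
  convert Fintype.prod_boole

lemma ghzS1_ket {m : Fin N} (hm : (m : ℕ) ≠ 0) (x y x' y' : Fin 2) :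
    ghzS1 N (ket m x y) (ket m x' y') = if x.rev = x' ∧ y.rev = y' then 1 else 0 := by
  rw [ghzS1_apply]
  refine if_congr ⟨fun h => ⟨?_, by simpa using h m⟩, ?_⟩ rfl rfl
  · simpa [ket_apply_of_ne (prevQubit_ne hm)] using h (prevQubit m)
  · rintro ⟨rfl, rfl⟩ i
    by_cases hi : i = m
    · subst hi; simp
    · simp [ket_apply_of_ne hi]

lemma ghzSz_eq_diagonal {m : Fin N} (hm : (m : ℕ) ≠ 0) :
    ghzSz N m = diagonal fun v => zsign (v (prevQubit m)) * zsign (v m) := by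
  have hS : ∀ i : Fin N,
      ((i : ℕ) = m - 1 ∨ i = m) ↔ i ∈ ({prevQubit m, m} : Finset (Fin N)) := by
    simp [prevQubit, Fin.ext_iff]
  have : (fun i : Fin N => if (i : ℕ) = m - 1 ∨ i = m then sigz else 1) = fun i =>
      diagonal fun a => if i ∈ ({prevQubit m, m} : Finset (Fin N)) then zsign a else 1 := by
    funext i
    simp only [hS]
    split_ifs <;> simp [sigz_eq_diagonal, ← diagonal_one]
  rw [ghzSz, this, tensorAll_diagonal]
  simp only [Finset.prod_ite_mem, Finset.univ_inter, Finset.prod_pair (prevQubit_ne hm)]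

lemma half_one_add_ghzSz {m : Fin N} (hm : (m : ℕ) ≠ 0) :
    (1 / 2 : ℂ) • (1 + ghzSz N m) =
      diagonal fun v => if v (prevQubit m) = v m then 1 else 0 := by
  rw [ghzSz_eq_diagonal hm, ← diagonal_one, diagonal_add, ← diagonal_smul]
  congr 1
  funext v
  simp only [Pi.smul_apply, zsign_mul_zsign, smul_eq_mul]
  split_ifs <;> norm_num

lemma ghzProd_eq_diagonal : ghzProd N =
    diagonal fun v => if ∀ m : Fin N, (m : ℕ) ≠ 0 → v (prevQubit m) = v m then 1 else 0 := by
  set l : List (Fin N) := (List.finRange N).filter fun m => m.val ≠ 0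
  have hl : ∀ m, m ∈ l ↔ (m : ℕ) ≠ 0 := by simp [l]
  let g : Fin N → (Fin N → Fin 2) → ℂ := fun m v => if v (prevQubit m) = v m then 1 else 0
  have hprod : ghzProd N = diagonal (l.map g).prod := by
    rw [ghzProd, ← diagonalRingHom_apply, map_list_prod, List.map_map]
    exact congrArg List.prod (List.map_congr_left fun m hm => half_one_add_ghzSz ((hl m).1 hm))
  rw [hprod]
  congr 1
  funext v
  rw [Pi.list_prod_apply, List.map_map]
  split_ifs with h
  · exact List.prod_eq_one fun z hz => by
      obtain ⟨m, hm, rfl⟩ := List.mem_map.1 hz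
      simp [g, h m ((hl m).1 hm)]
  · push Not at h
    obtain ⟨m, hm, hne⟩ := h
    exact List.prod_eq_zero (List.mem_map.2 ⟨m, (hl m).2 hm, by simp [g, hne]⟩)

lemma ghzProd_ket {m : Fin N} (hm : (m : ℕ) ≠ 0) (x y x' y' : Fin 2) :
    ghzProd N (ket m x y) (ket m x' y') = if x = x' ∧ y = y' ∧ x = y then 1 else 0 := by
  rw [ghzProd_eq_diagonal, diagonal_apply]
  simp only [ket_inj hm]
  by_cases hxy : x = y
  · subst hxy
    simp [ket_self]
  · have hjump : ¬ ket m x y (prevQubit m) = ket m x y m := by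
      simpa [ket_apply_of_ne (prevQubit_ne hm)] using hxy
    simpa [hxy] using fun _ _ => ⟨m, hm, hjump⟩

lemma ghzWitnessMod_apply (lam : ℝ) (u v : Fin N → Fin 2) :
    ghzWitnessMod N lam u v = 2 * (1 : QM N) u v - lam * ghzS1 N u v - 2 * ghzProd N u v := by
  simp only [ghzWitnessMod, Matrix.sub_apply, Matrix.add_apply, Matrix.smul_apply, smul_eq_mul]
  ring

-- The two-qubit X-state `[[a,0,0,c],[0,b,d,0],[0,d,b,0],[c,0,0,a]]`, via `|x y⟩ ↦ ket m x y`.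
def xState (m : Fin N) (a b c d : ℝ) : QM N :=
  let e x y x' y' := single (ket m x y) (ket m x' y') (1 : ℂ)
  (a : ℂ) • (e 0 0 0 0 + e 1 1 1 1) + (b : ℂ) • (e 0 1 0 1 + e 1 0 1 0) +
    (c : ℂ) • (e 0 0 1 1 + e 1 1 0 0) + (d : ℂ) • (e 0 1 1 0 + e 1 0 0 1)

lemma phiMap_xState (m : Fin N) (lam a b c d : ℝ) :
    let s := √(1 - lam ^ 2)
    phiMap N m lam (xState m a b c d) =
      xState m ((3 + s) / 4 * a + (1 - s) / 4 * b) ((3 + s) / 4 * b + (1 - s) / 4 * a)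
        ((1 + s) / 4 * c + (1 - s) / 4 * d) ((1 + s) / 4 * d + (1 - s) / 4 * c) := by
  simp only [phiMap, xState, Matrix.mul_add, Matrix.add_mul, mul_smul_comm, smul_mul_assoc,
    site_sigz_conj_single, site_sigx_conj_single, flipAt_ket, ket_apply_self]
  simp only [zsign, Matrix.cons_val_zero, Matrix.cons_val_one, show (0 : Fin 2).rev = 1 from rfl,
    show (1 : Fin 2).rev = 0 from rfl]
  push_cast
  module

lemma trace_ghzWitnessMod_mul_xState {m : Fin N} (hm : (m : ℕ) ≠ 0) (lam a b c d : ℝ) :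
    (ghzWitnessMod N lam * xState m a b c d).trace = ((4 * b - 2 * lam * (c + d) : ℝ) : ℂ) := by
  simp only [xState, Matrix.mul_add, mul_smul_comm, trace_add, trace_smul, trace_mul_single,
    MulOpposite.op_one, one_smul, ghzWitnessMod_apply, one_apply, ket_inj hm, ghzS1_ket hm,
    ghzProd_ket hm]
  simp
  ring

-- `Φ_λ` fixes `a + b` and scales `a − b`, `c + d`, `c − d` by `(1 + s)/2`, `1/2`, `s/2`.
def seqState (m : Fin N) (s : ℝ) (j : ℕ) : QM N :=
  xState m ((1 + ((1 + s) / 2) ^ j) / 4) ((1 - ((1 + s) / 2) ^ j) / 4)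
    (((1 / 2) ^ j + (s / 2) ^ j) / 4) (((1 / 2) ^ j - (s / 2) ^ j) / 4)

lemma phiMap_seqState (m : Fin N) (lam : ℝ) (j : ℕ) :
    phiMap N m lam (seqState m √(1 - lam ^ 2) j) = seqState m √(1 - lam ^ 2) (j + 1) := by
  rw [seqState, phiMap_xState, seqState]
  congr 1 <;> ring

lemma ghzVec_eq [Nonempty (Fin N)] :
    ghzVec N = ((1 / √2 : ℝ) : ℂ) • (Pi.single (fun _ => 0) 1 + Pi.single (fun _ => 1) 1) := by
  funext v
  by_cases h0 : ∀ i, v i = 0 <;> by_cases h1 : ∀ i, v i = 1 <;>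
    simp [ghzVec, h0, h1, Pi.single_apply, funext_iff]

lemma outer_ghzVec (m : Fin N) (s : ℝ) : outer N (ghzVec N) = seqState m s 0 := by
  have hr : ((1 / √2 : ℝ) : ℂ) * star ((1 / √2 : ℝ) : ℂ) = 1 / 2 := by
    rw [Complex.star_def, Complex.conj_ofReal, ← Complex.ofReal_mul, div_mul_div_comm,
      Real.mul_self_sqrt zero_le_two]
    norm_num
  have : Nonempty (Fin N) := ⟨m⟩
  rw [outer, ghzVec_eq, star_smul, vecMulVec_smul, smul_vecMulVec, smul_smul, mul_comm, hr]
  simp only [star_add, Pi.star_single, star_one, add_vecMulVec, vecMulVec_add,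
    ← single_eq_single_vecMulVec_single, seqState, xState, ket_self]
  norm_num
  module

lemma re_trace_ghzWitnessMod_mul_seqState {m : Fin N} (hm : (m : ℕ) ≠ 0) (lam s : ℝ) (j : ℕ) :
    (ghzWitnessMod N lam * seqState m s j).trace.re =
      1 - ((1 + s) / 2) ^ j - lam * (1 / 2) ^ j := by
  rw [seqState, trace_ghzWitnessMod_mul_xState hm, Complex.ofReal_re]
  ring

end

lemma one_sub_pow_sub_lt_zero {L : ℝ} {j : ℕ} (hL0 : 0 < L) (hL1 : L ≤ 1)
    (hj : j * L ≤ (1 / 2) ^ j) : 1 - ((1 + √(1 - L ^ 2)) / 2) ^ j - L * (1 / 2) ^ j < 0 := by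
  set s := √(1 - L ^ 2)
  have hL2 : 0 ≤ 1 - L ^ 2 := by nlinarith
  have hs : 1 - L ^ 2 ≤ s := by
    rw [Real.le_sqrt hL2 hL2]
    nlinarith [mul_nonneg hL2 (sq_nonneg L)]
  have hbern := one_add_mul_sub_le_pow (a := (1 + s) / 2)
    (by linarith [Real.sqrt_nonneg (1 - L ^ 2)]) j
  have hgap : (j : ℝ) * (1 - s) ≤ j * L ^ 2 := by gcongr; linarith
  have hpow : (0 : ℝ) < L * (1 / 2) ^ j := by positivity
  nlinarith [mul_le_mul_of_nonneg_left hj hL0.le]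

lemma nat_mul_half_pow_div_le {j n : ℕ} (hj : j ≤ n) :
    j * ((1 / 2) ^ n / (n + 2)) ≤ (1 / 2 : ℝ) ^ j := by
  calc (j : ℝ) * ((1 / 2) ^ n / (n + 2)) = j / (n + 2) * (1 / 2) ^ n := by ring
    _ ≤ 1 * (1 / 2) ^ n := by
      gcongr
      rw [div_le_one (by positivity)]
      exact_mod_cast hj.trans (by omega)
    _ ≤ (1 / 2) ^ j := by
      rw [one_mul]
      exact pow_le_pow_of_le_one (by norm_num) (by norm_num) hj

/-- arbitrarily many sequential detections for the GHZ state.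
For every integer `N ≥ 3` and every natural number `n`, there exist sharpness
parameters `λ_1, …, λ_n ∈ (0,1)` such that, setting `ρ_1 = |GHZ_N⟩⟨GHZ_N|` and
`ρ_k = (id ⊗ Φ_{λ_{k−1}})(ρ_{k−1})` for `2 ≤ k ≤ n` (the map acting on the `N`-th
qubit), one has `Tr(W^{λ_k} ρ_k) < 0` for every `k = 1, …, n`; i.e., all `n`
sequential observers detect genuine multipartite entanglement. -/
theorem ghz_arbitrarily_many_sequential_detections
    (N : ℕ) (hN : 3 ≤ N) (n : ℕ) :
    ∃ lam : ℕ → ℝ,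
      (∀ k, 1 ≤ k → k ≤ n → lam k ∈ Set.Ioo (0 : ℝ) 1) ∧
      ∀ ρ : ℕ → QM N,
        ρ 1 = outer N (ghzVec N) →
        (∀ k, 2 ≤ k → k ≤ n →
          ρ k = phiMap N ⟨N - 1, by omega⟩ (lam (k - 1)) (ρ (k - 1))) →
        ∀ k, 1 ≤ k → k ≤ n → ((ghzWitnessMod N (lam k) * ρ k).trace).re < 0 := by
  set L : ℝ := (1 / 2) ^ n / (n + 2)
  have hL0 : 0 < L := by positivity
  have hL1 : L < 1 := by
    rw [div_lt_one (by positivity)]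
    linarith [pow_le_one₀ (by norm_num : (0 : ℝ) ≤ 1 / 2) (by norm_num) (n := n)]
  refine ⟨fun _ => L, fun _ _ _ => ⟨hL0, hL1⟩, fun ρ hρ₁ hρ k hk hkn => ?_⟩
  set m : Fin N := ⟨N - 1, by omega⟩
  have hm : (m : ℕ) ≠ 0 := by simp [m]; omega
  have hseq : ∀ k, 1 ≤ k → k ≤ n → ρ k = seqState m √(1 - L ^ 2) (k - 1) := by
    intro k hk
    induction k, hk using Nat.le_induction with
    | base => exact fun _ => by rw [hρ₁, outer_ghzVec]
    | succ k hk ih =>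
      intro hkn
      rw [hρ (k + 1) (by omega) hkn, Nat.add_sub_cancel, ih (by omega), phiMap_seqState,
        Nat.sub_add_cancel hk]
  rw [hseq k hk hkn, re_trace_ghzWitnessMod_mul_seqState hm]
  exact one_sub_pow_sub_lt_zero hL0 hL1.le (nat_mul_half_pow_div_le (by omega))

end
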